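/- arXiv:1805.06826 — 2 statements merged into one kernel-verified Lean document; each statement's English description precedes it below -/
import Mathlib

section
/- Let X be a real-valued random variable with cumulative distribution function F, and let V be uniform on (0,1) and independent of X. Define the modified distribution function F(x, λ) = P(X < x) + λ·P(X = x) and set U = F(X, V) = F(X⁻) + V·(F(X) − F(X⁻)), where F(X⁻) denotes the left limit of F at X. Then U is uniformly distributed on (0,1). -/
/-!
For `u ∈ (0,1)` choose a `u`-quantile `x₀` of `X`, i.e. `F(x₀⁻) ≤ u ≤ F(x₀)`, and let
`E = {X < x₀} ∪ {X = x₀, V·(F(x₀) - F(x₀⁻)) ≤ u - F(x₀⁻)}`. Since `U` is monotone in `(X, V)` for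
the lexicographic order, `{U < u} ⊆ E ⊆ {U ≤ u}` almost surely, and by independence
`P(E) = F(x₀⁻) + P(X = x₀)·(u - F(x₀⁻))/P(X = x₀) = u`. The bounds `P(U < u) ≤ u ≤ P(U ≤ u)`
on `(0,1)` then force the distribution function of `U` to be that of the uniform law.
-/

open MeasureTheory ProbabilityTheory Set Filter Topology Function

section CDF

variable (ν : Measure ℝ)

lemma leftLim_cdf_nonneg (x : ℝ) : 0 ≤ leftLim (cdf ν) x :=
  (cdf_nonneg ν (x - 1)).trans ((monotone_cdf ν).le_leftLim (sub_one_lt x))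

variable [IsProbabilityMeasure ν]

lemma ofReal_leftLim_cdf (x : ℝ) : ENNReal.ofReal (leftLim (cdf ν) x) = ν (Iio x) := by
  simpa [measure_cdf] using ((cdf ν).measure_Iio (tendsto_cdf_atBot ν) x).symm

lemma leftLim_cdf_eq_real (x : ℝ) : leftLim (cdf ν) x = ν.real (Iio x) := by
  rw [measureReal_def, ← ofReal_leftLim_cdf, ENNReal.toReal_ofReal (leftLim_cdf_nonneg ν x)]

lemma ofReal_cdf_sub_leftLim_cdf (x : ℝ) :
    ENNReal.ofReal (cdf ν x - leftLim (cdf ν) x) = ν {x} := by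
  rw [← (cdf ν).measure_singleton, measure_cdf]

end CDF

lemma StieltjesFunction.exists_leftLim_le_le (f : StieltjesFunction ℝ) {u : ℝ}
    (hbot : ∃ x, f x < u) (htop : ∃ x, u ≤ f x) : ∃ x, leftLim f x ≤ u ∧ u ≤ f x := by
  obtain ⟨b, hb⟩ := hbot
  set S := {y | u ≤ f y}
  have hS : BddBelow S := ⟨b, fun y hy => le_of_lt (f.mono.reflect_lt (hb.trans_le hy))⟩
  refine ⟨sInf S, le_of_tendsto (f.mono.tendsto_leftLim _) ?_,
    ge_of_tendsto (((f.right_continuous _).mono Ioi_subset_Ici_self).tendsto) ?_⟩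
  · filter_upwards [self_mem_nhdsWithin] with y hy
    exact le_of_lt (not_le.1 fun h => (not_le.2 hy) (csInf_le hS h))
  · filter_upwards [self_mem_nhdsWithin] with y hy
    obtain ⟨s, hs, hsy⟩ := exists_lt_of_csInf_lt htop hy
    exact le_trans hs (f.mono hsy.le)

lemma volume_restrict_Ioo_Iic {s : ℝ} (hs : s ∈ Icc 0 1) :
    volume.restrict (Ioo (0 : ℝ) 1) (Iic s) = ENNReal.ofReal s := by
  have : Iic s ∩ Icc 0 1 = Icc 0 s := by
    ext x; simp only [mem_inter_iff, mem_Iic, mem_Icc]; grind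
  rw [Measure.restrict_congr_set Ioo_ae_eq_Icc, Measure.restrict_apply measurableSet_Iic, this,
    Real.volume_Icc, sub_zero]

instance : IsProbabilityMeasure (volume.restrict (Ioo (0 : ℝ) 1)) :=
  ⟨by simp⟩

lemma MeasureTheory.Measure.ext_of_measure_Iic_of_mem_Icc {ρ ρ' : Measure ℝ}
    [IsProbabilityMeasure ρ] [IsProbabilityMeasure ρ'] {a b : ℝ} (hab : a ≤ b)
    (h : ∀ u ∈ Icc a b, ρ (Iic u) = ρ' (Iic u)) (ha : ρ (Iic a) = 0) (hb : ρ (Iic b) = 1) :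
    ρ = ρ' := by
  have ha' : ρ' (Iic a) = 0 := h a ⟨le_rfl, hab⟩ ▸ ha
  have hb' : ρ' (Iic b) = 1 := h b ⟨hab, le_rfl⟩ ▸ hb
  refine Measure.ext_of_Iic ρ ρ' fun u => ?_
  rcases le_or_gt u a with hua | hau
  · rw [measure_mono_null (Iic_subset_Iic.2 hua) ha, measure_mono_null (Iic_subset_Iic.2 hua) ha']
  rcases le_or_gt b u with hbu | hub
  · rw [le_antisymm prob_le_one (hb ▸ measure_mono (Iic_subset_Iic.2 hbu)),
      le_antisymm prob_le_one (hb' ▸ measure_mono (Iic_subset_Iic.2 hbu))]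
  exact h u ⟨hau.le, hub.le⟩

lemma measure_Iic_eq_ofReal_of_forall_Ioo (ρ : Measure ℝ) [IsProbabilityMeasure ρ]
    (hlt : ∀ u ∈ Ioo 0 1, ρ (Iio u) ≤ ENNReal.ofReal u)
    (hle : ∀ u ∈ Ioo 0 1, ENNReal.ofReal u ≤ ρ (Iic u)) {u : ℝ} (hu : u ∈ Icc 0 1) :
    ρ (Iic u) = ENNReal.ofReal u := by
  have hofReal : Continuous ENNReal.ofReal := ENNReal.continuous_ofReal
  refine le_antisymm ?_ ?_
  · rcases hu.2.lt_or_eq with hu1 | rfl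
    · refine ge_of_tendsto (hofReal.continuousWithinAt (s := Ioi u)).tendsto ?_
      filter_upwards [Ioo_mem_nhdsGT hu1] with v hv
      exact (measure_mono (Iic_subset_Iio.2 hv.1)).trans (hlt v ⟨hu.1.trans_lt hv.1, hv.2⟩)
    · simpa using prob_le_one
  · rcases hu.1.lt_or_eq with hu0 | rfl
    · refine le_of_tendsto (hofReal.continuousWithinAt (s := Iio u)).tendsto ?_
      filter_upwards [Ioo_mem_nhdsLT hu0] with v hv
      exact (hle v ⟨hv.1, hv.2.trans_le hu.2⟩).trans (measure_mono (Iic_subset_Iic.2 hv.2.le))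
    · simp

lemma eq_volume_restrict_Ioo_of_forall_Ioo (ρ : Measure ℝ) [IsProbabilityMeasure ρ]
    (hlt : ∀ u ∈ Ioo 0 1, ρ (Iio u) ≤ ENNReal.ofReal u)
    (hle : ∀ u ∈ Ioo 0 1, ENNReal.ofReal u ≤ ρ (Iic u)) :
    ρ = volume.restrict (Ioo 0 1) := by
  have hρ := fun u (hu : u ∈ Icc (0 : ℝ) 1) => measure_Iic_eq_ofReal_of_forall_Ioo ρ hlt hle hu
  refine Measure.ext_of_measure_Iic_of_mem_Icc zero_le_one
    (fun u hu => (hρ u hu).trans (volume_restrict_Ioo_Iic hu).symm) ?_ ?_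
  · simpa using hρ 0 ⟨le_rfl, zero_le_one⟩
  · simpa using hρ 1 ⟨zero_le_one, le_rfl⟩

noncomputable def distributionalTransform (F : ℝ → ℝ) (p : ℝ × ℝ) : ℝ :=
  leftLim F p.1 + p.2 * (F p.1 - leftLim F p.1)

section Transform

variable {F : ℝ → ℝ} {x₀ u : ℝ}

lemma Monotone.measurable_distributionalTransform (hF : Monotone F) :
    Measurable (distributionalTransform F) :=
  (hF.leftLim.measurable.comp measurable_fst).add
    (measurable_snd.mul ((hF.measurable.comp measurable_fst).sub
      (hF.leftLim.measurable.comp measurable_fst)))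

lemma Monotone.lt_or_eq_of_distributionalTransform_lt (hF : Monotone F) {p : ℝ × ℝ}
    (hp : 0 ≤ p.2) (hu : u ≤ F x₀) (h : distributionalTransform F p < u) :
    p.1 < x₀ ∨ p.1 = x₀ ∧ p.2 * (F x₀ - leftLim F x₀) ≤ u - leftLim F x₀ := by
  unfold distributionalTransform at h
  rcases lt_trichotomy p.1 x₀ with hlt | heq | hgt
  · exact Or.inl hlt
  · rw [heq] at h
    exact Or.inr ⟨heq, by linarith⟩
  · have hjump : 0 ≤ p.2 * (F p.1 - leftLim F p.1) :=
      mul_nonneg hp (sub_nonneg.2 (hF.leftLim_le le_rfl))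
    linarith [hF.le_leftLim hgt]

lemma Monotone.distributionalTransform_le_of_lt_or_eq (hF : Monotone F) {p : ℝ × ℝ}
    (hp : p.2 ≤ 1) (hu : leftLim F x₀ ≤ u)
    (h : p.1 < x₀ ∨ p.1 = x₀ ∧ p.2 * (F x₀ - leftLim F x₀) ≤ u - leftLim F x₀) :
    distributionalTransform F p ≤ u := by
  unfold distributionalTransform
  rcases h with hlt | ⟨heq, hle⟩
  · have hjump : p.2 * (F p.1 - leftLim F p.1) ≤ F p.1 - leftLim F p.1 :=
      mul_le_of_le_one_left (sub_nonneg.2 (hF.leftLim_le le_rfl)) hp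
    linarith [hF.le_leftLim hlt]
  · rw [heq]
    linarith

end Transform

lemma ofReal_mul_volume_restrict_Ioo_setOf_mul_le {d t : ℝ} (ht : 0 ≤ t) (htd : t ≤ d) :
    ENNReal.ofReal d * volume.restrict (Ioo (0 : ℝ) 1) {v | v * d ≤ t} = ENNReal.ofReal t := by
  rcases (ht.trans htd).eq_or_lt with rfl | hd
  · simp [le_antisymm htd ht]
  have hset : {v : ℝ | v * d ≤ t} = Iic (t / d) := by
    ext v; exact (le_div_iff₀ hd).symm
  rw [hset, volume_restrict_Ioo_Iic ⟨div_nonneg ht hd.le, (div_le_one hd).2 htd⟩,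
    ← ENNReal.ofReal_mul hd.le, mul_div_cancel₀ t hd.ne']

lemma prod_volume_restrict_Ioo_setOf_lt_or_eq_and_mul_le (ν : Measure ℝ)
    [IsProbabilityMeasure ν] {x₀ u : ℝ} (hleft : leftLim (cdf ν) x₀ ≤ u) (hright : u ≤ cdf ν x₀) :
    ν.prod (volume.restrict (Ioo 0 1)) {p | p.1 < x₀ ∨ p.1 = x₀ ∧
      p.2 * (cdf ν x₀ - leftLim (cdf ν) x₀) ≤ u - leftLim (cdf ν) x₀} = ENNReal.ofReal u := by
  set d := cdf ν x₀ - leftLim (cdf ν) x₀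
  have hset : {p : ℝ × ℝ | p.1 < x₀ ∨ p.1 = x₀ ∧ p.2 * d ≤ u - leftLim (cdf ν) x₀} =
      Iio x₀ ×ˢ univ ∪ {x₀} ×ˢ {v | v * d ≤ u - leftLim (cdf ν) x₀} := by
    ext p; simp [and_comm]
  have hdisj :
      Disjoint (Iio x₀ ×ˢ (univ : Set ℝ)) ({x₀} ×ˢ {v | v * d ≤ u - leftLim (cdf ν) x₀}) :=
    disjoint_prod.2 (Or.inl (disjoint_singleton_right.2 (lt_irrefl x₀)))
  have hmeas : MeasurableSet ({x₀} ×ˢ {v : ℝ | v * d ≤ u - leftLim (cdf ν) x₀}) :=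
    (measurableSet_singleton x₀).prod (measurableSet_le (by fun_prop) measurable_const)
  rw [hset, measure_union hdisj hmeas, Measure.prod_prod, Measure.prod_prod,
    ← ofReal_leftLim_cdf, ← ofReal_cdf_sub_leftLim_cdf, measure_univ, mul_one,
    ofReal_mul_volume_restrict_Ioo_setOf_mul_le (sub_nonneg.2 hleft) (sub_le_sub_right hright _),
    ← ENNReal.ofReal_add (leftLim_cdf_nonneg ν x₀) (sub_nonneg.2 hleft), add_sub_cancel]

lemma exists_leftLim_cdf_le_le (ν : Measure ℝ) {u : ℝ} (hu : u ∈ Ioo 0 1) :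
    ∃ x, leftLim (cdf ν) x ≤ u ∧ u ≤ cdf ν x :=
  (cdf ν).exists_leftLim_le_le ((tendsto_cdf_atBot ν).eventually (gt_mem_nhds hu.1)).exists
    ((tendsto_cdf_atTop ν).eventually (le_mem_nhds hu.2)).exists

theorem map_distributionalTransform_cdf_prod (ν : Measure ℝ) [IsProbabilityMeasure ν] :
    (ν.prod (volume.restrict (Ioo 0 1))).map (distributionalTransform (cdf ν)) =
      volume.restrict (Ioo 0 1) := by
  have hT := (monotone_cdf ν).measurable_distributionalTransform
  have hsnd : ∀ᵐ p ∂ν.prod (volume.restrict (Ioo (0 : ℝ) 1)), p.2 ∈ Ioo 0 1 :=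
    ae_of_ae_map measurable_snd.aemeasurable
      (by rw [← Measure.snd, Measure.snd_prod]; exact ae_restrict_mem measurableSet_Ioo)
  have := Measure.isProbabilityMeasure_map (μ := ν.prod (volume.restrict (Ioo (0 : ℝ) 1)))
    hT.aemeasurable
  refine eq_volume_restrict_Ioo_of_forall_Ioo _ (fun u hu => ?_) (fun u hu => ?_) <;>
  obtain ⟨x₀, hleft, hright⟩ := exists_leftLim_cdf_le_le ν hu
  · rw [Measure.map_apply hT measurableSet_Iio,
      ← prod_volume_restrict_Ioo_setOf_lt_or_eq_and_mul_le ν hleft hright]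
    exact measure_mono_ae (hsnd.mono fun p hp hpu =>
      (monotone_cdf ν).lt_or_eq_of_distributionalTransform_lt hp.1.le hright hpu)
  · rw [Measure.map_apply hT measurableSet_Iic,
      ← prod_volume_restrict_Ioo_setOf_lt_or_eq_and_mul_le ν hleft hright]
    exact measure_mono_ae (hsnd.mono fun p hp hpu =>
      (monotone_cdf ν).distributionalTransform_le_of_lt_or_eq hp.2.le hleft hpu)

/-- the distributional transform `U = F(X⁻) + V·(F(X) − F(X⁻))`, where
`F(x) = P(X ≤ x)`, `F(x⁻) = P(X < x)` and `V ∼ Uniform(0,1)` is independent of `X`,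
is uniformly distributed on `(0,1)`. -/
theorem distributional_transform_uniform
    {Ω : Type*} [MeasurableSpace Ω]
    (μ : Measure Ω) [IsProbabilityMeasure μ]
    (X V : Ω → ℝ) (hX : Measurable X) (hV : Measurable V)
    (hVunif : μ.map V = volume.restrict (Set.Ioo (0 : ℝ) 1))
    (hindep : IndepFun X V μ)
    (F Fm : ℝ → ℝ)
    (hF : ∀ x, F x = (μ {ω | X ω ≤ x}).toReal)
    (hFm : ∀ x, Fm x = (μ {ω | X ω < x}).toReal)
    (U : Ω → ℝ)
    (hU : ∀ ω, U ω = Fm (X ω) + V ω * (F (X ω) - Fm (X ω))) :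
    μ.map U = volume.restrict (Set.Ioo (0 : ℝ) 1) := by
  have := Measure.isProbabilityMeasure_map (μ := μ) hX.aemeasurable
  have hF_cdf : F = cdf (μ.map X) := funext fun x => by
    rw [hF, cdf_eq_real, measureReal_def, Measure.map_apply hX measurableSet_Iic]; rfl
  have hFm_leftLim : Fm = leftLim (cdf (μ.map X)) := funext fun x => by
    rw [hFm, leftLim_cdf_eq_real, measureReal_def, Measure.map_apply hX measurableSet_Iio]; rfl
  have hU_comp : U = distributionalTransform (cdf (μ.map X)) ∘ fun ω => (X ω, V ω) :=
    funext fun ω => by rw [hU, hF_cdf, hFm_leftLim]; rfl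
  rw [hU_comp, ← Measure.map_map (monotone_cdf _).measurable_distributionalTransform
      (hX.prodMk hV), hindep.map_prod_eq_prod_map_map hX.aemeasurable hV.aemeasurable, hVunif,
    map_distributionalTransform_cdf_prod]
end

section
/- With the setup of the distributional transform — X real-valued with CDF F, V ∼ Uniform(0,1) independent of X, and U = F(X⁻) + V·(F(X) − F(X⁻)) — one has X = F⁻¹(U) almost surely, where F⁻¹(u) = inf{x : F(x) ≥ u} is the generalized inverse (quantile function) of F. -/
/-!
Write `a = X ω`. For `x < a` we have `F x ≤ F(a⁻) ≤ F a`, so for `0 < V ω ≤ 1` the value `U ω`,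
a convex combination of `F(a⁻)` and `F a`, satisfies `F x < U ω ≤ F a` as soon as `F x < F a`,
which makes `a` the least `x` with `U ω ≤ F x`. The exceptional event is that `F` is flat on some
`(x, a]`, i.e. that the law `ν` of `X` gives no mass to some interval `(x, a]`. This is `ν`-null:
shrinking `x` to a rational `q`, the points `a` with `ν (q, a] = 0` form an interval whose measure
is, by continuity from below, the supremum of the measures `ν (q, a]`, all zero.
-/

open MeasureTheory ProbabilityTheory Set Filter

lemma measure_setOf_measure_Ioc_eq_zero (ν : Measure ℝ) (q : ℝ) :
    ν {a | q < a ∧ ν (Ioc q a) = 0} = 0 := by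
  set T := {a | q < a ∧ ν (Ioc q a) = 0}
  have : OrdConnected T := ⟨fun _ ha _ hb c hc =>
    ⟨ha.1.trans_le hc.1, measure_mono_null (Ioc_subset_Ioc_right hc.2) hb.2⟩⟩
  have hcover : T ⊆ ⋃ a : T, Ioc q a := fun a ha =>
    mem_iUnion.2 ⟨⟨a, ha⟩, ha.1, le_rfl⟩
  refine measure_mono_null hcover ?_
  rw [Monotone.measure_iUnion (μ := ν) (s := fun a : T => Ioc q (a : ℝ))
    fun a b hab => Ioc_subset_Ioc_right hab]
  exact ENNReal.iSup_eq_zero.2 fun a => a.2.2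

lemma ae_forall_lt_measure_Ioc_pos (ν : Measure ℝ) : ∀ᵐ a ∂ν, ∀ x < a, 0 < ν (Ioc x a) := by
  rw [ae_iff]
  refine measure_mono_null (fun a ha => ?_)
    (measure_iUnion_null fun q : ℚ => measure_setOf_measure_Ioc_eq_zero ν q)
  obtain ⟨x, hxa, hnull⟩ : ∃ x < a, ν (Ioc x a) = 0 := by simpa using ha
  obtain ⟨q, hxq, hqa⟩ := exists_rat_btwn hxa
  exact mem_iUnion.2 ⟨q, hqa, measure_mono_null (Ioc_subset_Ioc_left hxq.le) hnull⟩

lemma ae_forall_lt_cdf_lt (ν : Measure ℝ) [IsProbabilityMeasure ν] :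
    ∀ᵐ a ∂ν, ∀ x < a, cdf ν x < cdf ν a := by
  filter_upwards [ae_forall_lt_measure_Ioc_pos ν] with a ha x hxa
  have hpos := ha x hxa
  rwa [← measure_cdf ν, StieltjesFunction.measure_Ioc, ENNReal.ofReal_pos, sub_pos] at hpos

lemma csInf_setOf_le_convex_comb_eq {F : ℝ → ℝ} {a b v : ℝ} (hFb : ∀ x < a, F x ≤ b)
    (hbF : b ≤ F a) (hFa : ∀ x < a, F x < F a) (hv : v ∈ Ioc 0 1) :
    sInf {x | b + v * (F a - b) ≤ F x} = a := by
  obtain ⟨hv0, hv1⟩ := hv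
  refine IsLeast.csInf_eq ⟨show b + v * (F a - b) ≤ F a by nlinarith, fun x hx => ?_⟩
  by_contra! hxa
  have hxb := hFb x hxa
  have hxFa := hFa x hxa
  have hx' : b + v * (F a - b) ≤ F x := hx
  nlinarith

theorem distributional_transform_inverse_general
    {Ω : Type*} [MeasurableSpace Ω]
    (μ : Measure Ω) [IsProbabilityMeasure μ]
    (X V : Ω → ℝ) (hX : Measurable X) (hV : Measurable V)
    (hVunif : μ.map V = volume.restrict (Set.Ioo (0 : ℝ) 1))
    (F Fm : ℝ → ℝ)
    (hF : ∀ x, F x = (μ {ω | X ω ≤ x}).toReal)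
    (hFm : ∀ x, Fm x = (μ {ω | X ω < x}).toReal)
    (U : Ω → ℝ)
    (hU : ∀ ω, U ω = Fm (X ω) + V ω * (F (X ω) - Fm (X ω)))
    (Finv : ℝ → ℝ)
    (hFinv : ∀ u, Finv u = sInf {x : ℝ | u ≤ F x}) :
    ∀ᵐ ω ∂μ, X ω = Finv (U ω) := by
  have := Measure.isProbabilityMeasure_map (μ := μ) hX.aemeasurable
  have hF_eq_cdf : ∀ x, F x = cdf (μ.map X) x := fun x => by
    rw [hF, cdf_eq_real, map_measureReal_apply hX measurableSet_Iic]
    rfl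
  have hF_le_Fm : ∀ a, ∀ x < a, F x ≤ Fm a := fun a x hxa => by
    rw [hF, hFm]
    exact ENNReal.toReal_mono (measure_ne_top _ _) (measure_mono fun ω h => lt_of_le_of_lt h hxa)
  have hFm_le_F : ∀ a, Fm a ≤ F a := fun a => by
    rw [hF, hFm]
    exact ENNReal.toReal_mono (measure_ne_top _ _) (measure_mono fun ω (h : X ω < a) => h.le)
  have hV_mem : ∀ᵐ ω ∂μ, V ω ∈ Ioo 0 1 :=
    ae_of_ae_map hV.aemeasurable (hVunif ▸ ae_restrict_mem measurableSet_Ioo)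
  have hF_lt : ∀ᵐ ω ∂μ, ∀ x < X ω, F x < F (X ω) := by
    simpa only [hF_eq_cdf] using ae_of_ae_map hX.aemeasurable (ae_forall_lt_cdf_lt (μ.map X))
  filter_upwards [hV_mem, hF_lt] with ω hVω hFω
  rw [hFinv, hU, csInf_setOf_le_convex_comb_eq (hF_le_Fm _) (hFm_le_F _) hFω
    (Ioo_subset_Ioc_self hVω)]

/-- with the distributional transform `U = F(X⁻) + V·(F(X) − F(X⁻))`,
one has `X = F⁻¹(U)` almost surely, where `F⁻¹(u) = inf {x | F x ≥ u}` is the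
generalized inverse (quantile function) of the CDF `F`. -/
theorem distributional_transform_inverse
    {Ω : Type*} [MeasurableSpace Ω]
    (μ : Measure Ω) [IsProbabilityMeasure μ]
    (X V : Ω → ℝ) (hX : Measurable X) (hV : Measurable V)
    (hVunif : μ.map V = volume.restrict (Set.Ioo (0 : ℝ) 1))
    (hindep : IndepFun X V μ)
    (F Fm : ℝ → ℝ)
    (hF : ∀ x, F x = (μ {ω | X ω ≤ x}).toReal)
    (hFm : ∀ x, Fm x = (μ {ω | X ω < x}).toReal)
    (U : Ω → ℝ)
    (hU : ∀ ω, U ω = Fm (X ω) + V ω * (F (X ω) - Fm (X ω)))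
    (Finv : ℝ → ℝ)
    (hFinv : ∀ u, Finv u = sInf {x : ℝ | u ≤ F x}) :
    ∀ᵐ ω ∂μ, X ω = Finv (U ω) :=
  distributional_transform_inverse_general μ X V hX hV hVunif F Fm hF hFm U hU Finv hFinv
end
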